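/- arXiv:0808.0108 — 3 statements merged into one kernel-verified Lean document; each statement's English description precedes it below -/
import Mathlib

section
/- Let Q be a rack and A a commutative ring with ideal m. For f : Q^n × Q^n → A, define the partial coboundaries d_i^n f : Q^{n+1} × Q^{n+1} → A (for 0 ≤ i ≤ n) by (d_i^n f)[(x_0,...,x_n),(y_0,...,y_n)] = f[(x_0,...,x_{i-1},x_{i+1},...,x_n),(y_0,...,y_{i-1},y_{i+1},...,y_n)]·δ(x_i^{x_{i+1}⋯x_n}, y_i^{y_{i+1}⋯y_n}) − f[(x_0^{x_i},...,x_{i-1}^{x_i},x_{i+1},...,x_n),(y_0^{y_i},...,y_{i-1}^{y_i},y_{i+1},...,y_n)]·δ(x_i, y_i), where δ is the Kronecker delta. Then for i ≤ j one has d_i^{n+1} ∘ d_j^n = d_{j+1}^{n+1} ∘ d_i^n. -/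
open scoped Classical

variable {Q : Type*}

/-- A rack: every right translation is a bijection, and self-distributivity holds. -/
def IsRack (op : Q → Q → Q) : Prop :=
  (∀ y : Q, Function.Bijective fun x => op x y) ∧
    ∀ a b c : Q, op (op a b) c = op (op a c) (op b c)

/-- Behavioural equivalence: `x ≡ y` iff `a ∗ x = a ∗ y` for all `a`. -/
def behEq (op : Q → Q → Q) (x y : Q) : Prop := ∀ a : Q, op a x = op a y

noncomputable section

variable {A : Type*} [CommRing A]

/-- The iterated action `x_i ^ (x_{i+1} ⋯ x_n)`. -/
def opChain (op : Q → Q → Q) {n : ℕ} (x : Fin (n + 1) → Q) (i : Fin (n + 1)) : Q :=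
  ((List.finRange (n + 1)).filter fun j => i < j).foldl (fun a j => op a (x j)) (x i)

/-- The partial Yang-Baxter coboundary `d_i^n`. -/
def dpart (op : Q → Q → Q) {n : ℕ} (i : Fin (n + 1))
    (f : (Fin n → Q) → (Fin n → Q) → A) :
    (Fin (n + 1) → Q) → (Fin (n + 1) → Q) → A := fun x y =>
  f (x ∘ i.succAbove) (y ∘ i.succAbove) *
      (if opChain op x i = opChain op y i then (1 : A) else 0) -
    f (fun j => if i.succAbove j < i then op (x (i.succAbove j)) (x i) else x (i.succAbove j))
      (fun j => if i.succAbove j < i then op (y (i.succAbove j)) (y i) else y (i.succAbove j)) *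
      (if x i = y i then (1 : A) else 0)

/-- The Yang-Baxter coboundary `d^n = Σ (-1)^i d_i^n`. -/
def dYB (op : Q → Q → Q) {n : ℕ} (f : (Fin n → Q) → (Fin n → Q) → A) :
    (Fin (n + 1) → Q) → (Fin (n + 1) → Q) → A := fun x y =>
  ∑ i : Fin (n + 1), (-1 : A) ^ (i : ℕ) * dpart op i f x y

end

/-
Write `∂ᵢx` (`Fin.removeNth`) for `x` with its `i`-th entry deleted and `∂'ᵢx` (`rackFace`) for
the tuple obtained by acting with `xᵢ` on all entries before position `i` and then deleting the
`i`-th entry, so that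
`dᵢf(x, y) = f(∂ᵢx, ∂ᵢy) δ(xᵢ^{xᵢ₊₁⋯xₙ}, yᵢ^{yᵢ₊₁⋯yₙ}) − f(∂'ᵢx, ∂'ᵢy) δ(xᵢ, yᵢ)`.
For `i ≤ j` the faces satisfy the simplicial identities `∂ⱼ∂ᵢ = ∂ᵢ∂ⱼ₊₁`, `∂'ⱼ∂ᵢ = ∂ᵢ∂'ⱼ₊₁`,
`∂ⱼ∂'ᵢ = ∂'ᵢ∂ⱼ₊₁` and, by self-distributivity, `∂'ⱼ∂'ᵢ = ∂'ᵢ∂'ⱼ₊₁`, so both sides are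
combinations of the same four values of `f`. Their Kronecker factors are matched by the rack
identities `(xᵢ^{xⱼ₊₁})^{xᵢ₊₁^{xⱼ₊₁}⋯xⱼ^{xⱼ₊₁} xⱼ₊₂⋯xₙ} = xᵢ^{xᵢ₊₁⋯xₙ}` and
`xᵢ^{xᵢ₊₁⋯xₙ} = (xᵢ^{xᵢ₊₁⋯x̂ⱼ₊₁⋯xₙ})^{xⱼ₊₁^{xⱼ₊₂⋯xₙ}}`, and by
`δ(a^c, b^{c'}) δ(c, c') = δ(a, b) δ(c, c')`, which holds because right translations are injective.
-/

section Rack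
variable {op : Q → Q → Q}

theorem IsRack.foldl_op (h : IsRack op) (l : List Q) (a b : Q) :
    l.foldl op (op a b) = op (l.foldl op a) (l.foldl op b) := by
  induction l generalizing a b with
  | nil => rfl
  | cons c l ih => simp only [List.foldl_cons, h.2 a b c, ih]

theorem IsRack.ite_op_eq_op_mul_ite {A : Type*} [Semiring A] (h : IsRack op) (a₁ a₂ c₁ c₂ : Q) :
    (if op a₁ c₁ = op a₂ c₂ then (1 : A) else 0) * (if c₁ = c₂ then 1 else 0) =
      (if a₁ = a₂ then 1 else 0) * (if c₁ = c₂ then 1 else 0) := by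
  by_cases hc : c₁ = c₂
  · subst hc
    simp only [(h.1 c₁).1.eq_iff]
  · simp [hc]

end Rack

theorem List.ofFn_eq_cons_tail {α : Type*} {m : ℕ} (y : Fin (m + 1) → α) :
    List.ofFn y = y 0 :: List.ofFn (Fin.tail y) :=
  List.ofFn_succ

section Tuples
variable {n : ℕ}

def actBelow (op : Q → Q → Q) (p : Fin (n + 1)) (x : Fin (n + 1) → Q) : Fin (n + 1) → Q :=
  fun k => if k < p then op (x k) (x p) else x k

def rackFace (op : Q → Q → Q) (p : Fin (n + 1)) (x : Fin (n + 1) → Q) : Fin n → Q :=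
  Fin.removeNth p (actBelow op p x)

variable {op : Q → Q → Q}

theorem rackFace_apply (p : Fin (n + 1)) (x : Fin (n + 1) → Q) (k : Fin n) :
    rackFace op p x k =
      if p.succAbove k < p then op (x (p.succAbove k)) (x p) else x (p.succAbove k) :=
  rfl

theorem actBelow_zero (x : Fin (n + 1) → Q) : actBelow op 0 x = x := by
  funext k
  simp [actBelow]

theorem tail_actBelow_succ (p : Fin (n + 1)) (x : Fin (n + 2) → Q) :
    Fin.tail (actBelow op p.succ x) = actBelow op p (Fin.tail x) := by
  funext k
  simp [actBelow, Fin.tail]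

theorem actBelow_succ_zero (p : Fin (n + 1)) (x : Fin (n + 2) → Q) :
    actBelow op p.succ x 0 = op (x 0) (x p.succ) := by
  simp [actBelow, Fin.succ_pos]

theorem tail_removeNth_succ (p : Fin (n + 1)) (x : Fin (n + 2) → Q) :
    Fin.tail (Fin.removeNth p.succ x) = Fin.removeNth p (Fin.tail x) := by
  funext k
  simp [Fin.tail, Fin.removeNth, Fin.succ_succAbove_succ]

theorem removeNth_succ_zero (p : Fin (n + 1)) (x : Fin (n + 2) → Q) :
    Fin.removeNth p.succ x 0 = x 0 := by
  simp [Fin.removeNth]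

theorem removeNth_actBelow (p : Fin (n + 2)) (q : Fin (n + 1)) (x : Fin (n + 2) → Q) :
    Fin.removeNth p (actBelow op (p.succAbove q) x) = actBelow op q (Fin.removeNth p x) := by
  funext k
  simp [actBelow, Fin.removeNth, (Fin.strictMono_succAbove p).lt_iff_lt]

theorem IsRack.actBelow_comm (h : IsRack op) {p q : Fin (n + 1)} (hpq : p < q)
    (x : Fin (n + 1) → Q) :
    actBelow op q (actBelow op p x) = actBelow op p (actBelow op q x) := by
  funext k
  simp only [actBelow, if_neg hpq.not_gt, if_pos hpq]
  split_ifs <;> first | rfl | exact h.2 _ _ _ | omega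

theorem rackFace_zero (y : Fin (n + 1) → Q) : rackFace op 0 y = Fin.tail y := by
  rw [rackFace, actBelow_zero, Fin.removeNth_zero]

theorem rackFace_succ_zero (p : Fin (n + 1)) (x : Fin (n + 2) → Q) :
    rackFace op p.succ x 0 = op (x 0) (x p.succ) := by
  rw [rackFace, removeNth_succ_zero, actBelow_succ_zero]

theorem tail_rackFace_succ (p : Fin (n + 1)) (x : Fin (n + 2) → Q) :
    Fin.tail (rackFace op p.succ x) = rackFace op p (Fin.tail x) := by
  rw [rackFace, tail_removeNth_succ, tail_actBelow_succ, rackFace]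

end Tuples

section Chain
variable {op : Q → Q → Q} {n : ℕ}

theorem opChain_zero (x : Fin (n + 1) → Q) :
    opChain op x 0 = (List.ofFn (Fin.tail x)).foldl op (x 0) := by
  simp [opChain, List.finRange_succ, List.filter_map, Function.comp_def, Fin.succ_pos,
    List.foldl_map, List.ofFn_eq_map, Fin.tail]

theorem opChain_succ (x : Fin (n + 2) → Q) (i : Fin (n + 1)) :
    opChain op x i.succ = opChain op (Fin.tail x) i := by
  simp [opChain, List.finRange_succ, List.filter_map, Function.comp_def, List.foldl_map, Fin.tail]

theorem opChain_congr {x y : Fin (n + 1) → Q} {i : Fin (n + 1)} (hxy : ∀ k, i ≤ k → x k = y k) :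
    opChain op x i = opChain op y i := by
  simp only [opChain, ← List.foldl_map (g := op) (f := x), ← List.foldl_map (g := op) (f := y),
    hxy i le_rfl]
  congr 1
  refine List.map_congr_left fun k hk => hxy k ?_
  exact (of_decide_eq_true (List.mem_filter.1 hk).2).le

theorem opChain_removeNth_castSucc {p q : Fin (n + 1)} (hpq : p ≤ q) (x : Fin (n + 2) → Q) :
    opChain op (Fin.removeNth p.castSucc x) q = opChain op x q.succ := by
  rw [opChain_succ]
  refine opChain_congr fun k hk => ?_
  rw [Fin.removeNth_apply, Fin.succAbove_castSucc_of_le _ _ (hpq.trans hk)]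
  rfl

theorem opChain_actBelow_of_le {p q : Fin (n + 1)} (hpq : p ≤ q) (x : Fin (n + 1) → Q) :
    opChain op (actBelow op p x) q = opChain op x q :=
  opChain_congr fun _ hk => if_neg (hpq.trans hk).not_gt

theorem IsRack.foldl_ofFn_eq_op (h : IsRack op) {m : ℕ} (y : Fin (m + 1) → Q)
    (p : Fin (m + 1)) (a : Q) :
    (List.ofFn y).foldl op a =
      op ((List.ofFn (Fin.removeNth p y)).foldl op a) (opChain op y p) := by
  induction m generalizing a with
  | zero =>
    rw [Fin.fin_one_eq_zero p, List.ofFn_eq_cons_tail, List.foldl_cons, h.foldl_op,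
      Fin.removeNth_zero, opChain_zero]
  | succ m ih =>
    cases p using Fin.cases with
    | zero =>
      rw [List.ofFn_eq_cons_tail, List.foldl_cons, h.foldl_op, Fin.removeNth_zero, opChain_zero]
    | succ p =>
      rw [List.ofFn_eq_cons_tail, List.foldl_cons, opChain_succ,
        List.ofFn_eq_cons_tail (Fin.removeNth p.succ y), tail_removeNth_succ, List.foldl_cons,
        removeNth_succ_zero]
      exact ih (Fin.tail y) p _

theorem IsRack.opChain_zero_eq_op (h : IsRack op) (p : Fin (n + 1)) (x : Fin (n + 2) → Q) :
    opChain op x 0 = op (opChain op (Fin.removeNth p.succ x) 0) (opChain op x p.succ) := by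
  rw [opChain_zero, opChain_zero, h.foldl_ofFn_eq_op (Fin.tail x) p, removeNth_succ_zero,
    tail_removeNth_succ, opChain_succ]

theorem IsRack.opChain_castSucc (h : IsRack op) {p q : Fin (n + 1)} (hqp : q ≤ p)
    (x : Fin (n + 2) → Q) :
    opChain op x q.castSucc = op (opChain op (Fin.removeNth p.succ x) q) (opChain op x p.succ) := by
  induction n with
  | zero => rw [Fin.fin_one_eq_zero q]; exact h.opChain_zero_eq_op p x
  | succ n ih =>
    cases q using Fin.cases with
    | zero => exact h.opChain_zero_eq_op p x
    | succ q =>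
      obtain ⟨p, rfl⟩ := Fin.exists_succ_eq.2 ((Fin.succ_pos q).trans_le hqp).ne'
      rw [← Fin.succ_castSucc, opChain_succ, opChain_succ, opChain_succ, tail_removeNth_succ]
      exact ih (Fin.succ_le_succ_iff.1 hqp) _

theorem IsRack.foldl_ofFn_rackFace (h : IsRack op) {m : ℕ} (y : Fin (m + 1) → Q)
    (p : Fin (m + 1)) (a : Q) :
    (List.ofFn (rackFace op p y)).foldl op (op a (y p)) = (List.ofFn y).foldl op a := by
  induction m generalizing a with
  | zero => rw [Fin.fin_one_eq_zero p, rackFace_zero, List.ofFn_eq_cons_tail y, List.foldl_cons]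
  | succ m ih =>
    cases p using Fin.cases with
    | zero => rw [rackFace_zero, List.ofFn_eq_cons_tail y, List.foldl_cons]
    | succ p =>
      rw [List.ofFn_eq_cons_tail (rackFace op p.succ y), List.foldl_cons, rackFace_succ_zero,
        tail_rackFace_succ, ← h.2, List.ofFn_eq_cons_tail y, List.foldl_cons]
      exact ih (Fin.tail y) p _

theorem IsRack.opChain_rackFace_zero (h : IsRack op) (p : Fin (n + 1)) (x : Fin (n + 2) → Q) :
    opChain op (rackFace op p.succ x) 0 = opChain op x 0 := by
  rw [opChain_zero, opChain_zero, rackFace_succ_zero, tail_rackFace_succ]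
  exact h.foldl_ofFn_rackFace (Fin.tail x) p (x 0)

theorem IsRack.opChain_rackFace (h : IsRack op) {p q : Fin (n + 1)} (hqp : q ≤ p)
    (x : Fin (n + 2) → Q) :
    opChain op (rackFace op p.succ x) q = opChain op x q.castSucc := by
  induction n with
  | zero => rw [Fin.fin_one_eq_zero q]; exact h.opChain_rackFace_zero p x
  | succ n ih =>
    cases q using Fin.cases with
    | zero => exact h.opChain_rackFace_zero p x
    | succ q =>
      obtain ⟨p, rfl⟩ := Fin.exists_succ_eq.2 ((Fin.succ_pos q).trans_le hqp).ne'
      rw [← Fin.succ_castSucc, opChain_succ, opChain_succ, tail_rackFace_succ]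
      exact ih (Fin.succ_le_succ_iff.1 hqp) _

theorem opChain_rackFace_castSucc {p q : Fin (n + 1)} (hpq : p ≤ q) (x : Fin (n + 2) → Q) :
    opChain op (rackFace op p.castSucc x) q = opChain op x q.succ := by
  rw [rackFace, opChain_removeNth_castSucc hpq,
    opChain_actBelow_of_le ((Fin.castSucc_le_castSucc_iff.2 hpq).trans (Fin.castSucc_le_succ q))]

end Chain

section Faces
variable {op : Q → Q → Q} {n : ℕ} {i j : Fin (n + 1)}

theorem removeNth_removeNth_castSucc (hij : i ≤ j) (x : Fin (n + 2) → Q) :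
    Fin.removeNth j (Fin.removeNth i.castSucc x) = Fin.removeNth i (Fin.removeNth j.succ x) := by
  rw [Fin.removeNth_removeNth_eq_swap, Fin.predAbove_castSucc_of_le _ _ hij,
    Fin.succAbove_castSucc_of_le _ _ hij]

theorem rackFace_removeNth_castSucc (hij : i ≤ j) (x : Fin (n + 2) → Q) :
    rackFace op j (Fin.removeNth i.castSucc x) = Fin.removeNth i (rackFace op j.succ x) := by
  rw [rackFace, ← removeNth_actBelow, Fin.succAbove_castSucc_of_le _ _ hij,
    removeNth_removeNth_castSucc hij, rackFace]

theorem removeNth_rackFace_castSucc (hij : i ≤ j) (x : Fin (n + 2) → Q) :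
    Fin.removeNth j (rackFace op i.castSucc x) = rackFace op i (Fin.removeNth j.succ x) := by
  rw [rackFace, removeNth_removeNth_castSucc hij, ← Fin.succAbove_succ_of_le _ _ hij,
    removeNth_actBelow]
  rfl

theorem IsRack.rackFace_rackFace_castSucc (h : IsRack op) (hij : i ≤ j) (x : Fin (n + 2) → Q) :
    rackFace op j (rackFace op i.castSucc x) = rackFace op i (rackFace op j.succ x) := by
  rw [rackFace, rackFace, ← removeNth_actBelow, Fin.succAbove_castSucc_of_le _ _ hij,
    removeNth_removeNth_castSucc hij, h.actBelow_comm (Fin.castSucc_lt_succ_iff.2 hij),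
    ← Fin.succAbove_succ_of_le _ _ hij, removeNth_actBelow]
  rfl

end Faces

noncomputable section
variable {A : Type*} [CommRing A]

theorem dpart_apply (op : Q → Q → Q) {n : ℕ} (i : Fin (n + 1))
    (f : (Fin n → Q) → (Fin n → Q) → A) (x y : Fin (n + 1) → Q) :
    dpart op i f x y =
      f (Fin.removeNth i x) (Fin.removeNth i y) *
          (if opChain op x i = opChain op y i then 1 else 0) -
        f (rackFace op i x) (rackFace op i y) * (if x i = y i then 1 else 0) :=
  rfl

/-- The partial coboundaries satisfy `d_i^{n+1} ∘ d_j^n = d_{j+1}^{n+1} ∘ d_i^n` for `i ≤ j`. -/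
theorem dpart_dpart (op : Q → Q → Q) (h : IsRack op) {n : ℕ}
    (i j : Fin (n + 1)) (hij : i ≤ j) (f : (Fin n → Q) → (Fin n → Q) → A) :
    dpart op i.castSucc (dpart op j f) = dpart op j.succ (dpart op i f) := by
  funext x y
  have hj : i.castSucc.succAbove j = j.succ := Fin.succAbove_castSucc_of_le _ _ hij
  have hi : j.succ.succAbove i = i.castSucc := Fin.succAbove_succ_of_le _ _ hij
  have hlt : i.castSucc < j.succ := Fin.castSucc_lt_succ_iff.2 hij
  simp only [dpart_apply, removeNth_removeNth_castSucc hij, rackFace_removeNth_castSucc hij,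
    removeNth_rackFace_castSucc hij, h.rackFace_rackFace_castSucc hij,
    opChain_removeNth_castSucc hij, opChain_rackFace_castSucc hij, h.opChain_rackFace hij,
    Fin.removeNth_apply, rackFace_apply, hi, hj, if_pos hlt, if_neg hlt.not_gt]
  rw [h.opChain_castSucc hij x, h.opChain_castSucc hij y]
  linear_combination
    f (Fin.removeNth i (Fin.removeNth j.succ x)) (Fin.removeNth i (Fin.removeNth j.succ y)) *
        h.ite_op_eq_op_mul_ite (A := A) (opChain op (Fin.removeNth j.succ x) i)
          (opChain op (Fin.removeNth j.succ y) i) (opChain op x j.succ) (opChain op y j.succ) -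
      f (rackFace op i (rackFace op j.succ x)) (rackFace op i (rackFace op j.succ y)) *
        h.ite_op_eq_op_mul_ite (A := A) (x i.castSucc) (y i.castSucc) (x j.succ) (y j.succ)
end
end

section
/- Let Q be a rack. The diagonal cochains (those f : Q^n × Q^n → m with f[(x_1,...,x_n),(y_1,...,y_n)] = 0 whenever x_i ≠ y_i for some i) form a subcomplex of the Yang-Baxter cochain complex: if f is diagonal then so is each d_i^n f, hence so is d^n f. -/
/-!
Fix `i` and a pair `x, y` differing somewhere. If they differ at some `k ≠ i`, both faces of
`d_i f` still differ at the position of `k`: the first copies `x k`, the second replaces it by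
`x k ∗ x i`, which differs from `y k ∗ y i` when `x i = y i` because right translations of a
rack are injective (when `x i ≠ y i` the second summand carries the factor `δ(x i, y i) = 0`).
Otherwise `x` and `y` differ only at `i`, so `δ(x i, y i) = 0`, and `x_i ^ (x_{i+1} ⋯ x_n)`,
`y_i ^ (y_{i+1} ⋯ y_n)` are the images of the distinct `x i`, `y i` under one and the same
injective map, so the other delta vanishes too.
-/

open scoped Classical

variable {Q : Type*}

noncomputable section
variable {A : Type*} [CommRing A]

/-- A matrix is diagonal if its entries vanish whenever `x i ≠ y i` for some `i`. -/
def IsDiag {n : ℕ} (f : (Fin n → Q) → (Fin n → Q) → A) : Prop :=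
  ∀ x y : Fin n → Q, (∃ i, x i ≠ y i) → f x y = 0

section RightInjective

variable {op : Q → Q → Q} (hinj : ∀ c : Q, Function.Injective fun a => op a c)
include hinj

theorem foldl_op_injective {ι : Type*} (x : ι → Q) (l : List ι) :
    Function.Injective fun a => l.foldl (fun a j => op a (x j)) a := by
  induction l with
  | nil => exact fun _ _ h => h
  | cons j l ih => exact fun a b hab => hinj (x j) (ih hab)

theorem opChain_ne_of_ne_of_eq_above {n : ℕ} {x y : Fin (n + 1) → Q} {i : Fin (n + 1)}
    (hi : x i ≠ y i) (habove : ∀ j, i < j → x j = y j) :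
    opChain op x i ≠ opChain op y i := by
  unfold opChain
  set l := (List.finRange (n + 1)).filter fun j => i < j
  have hsame : l.foldl (fun a j => op a (x j)) (x i) = l.foldl (fun a j => op a (y j)) (x i) :=
    List.foldl_ext _ _ _ fun _ j hj => by rw [habove j (by simpa [l] using hj)]
  rw [hsame]
  exact fun h => hi (foldl_op_injective hinj y _ h)

theorem dpart_eq_zero_of_ne_succAbove {n : ℕ} {f : (Fin n → Q) → (Fin n → Q) → A}
    (hf : IsDiag f) (i : Fin (n + 1)) {x y : Fin (n + 1) → Q} {k : Fin n}
    (hk : x (i.succAbove k) ≠ y (i.succAbove k)) : dpart op i f x y = 0 := by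
  have hface : f (x ∘ i.succAbove) (y ∘ i.succAbove) = 0 := hf _ _ ⟨k, hk⟩
  unfold dpart
  rw [hface, zero_mul, zero_sub, neg_eq_zero]
  by_cases hi : x i = y i
  · rw [hf _ _ ⟨k, ?_⟩, zero_mul]
    split_ifs
    · rw [hi]
      exact fun h => hk (hinj (y i) h)
    · exact hk
  · rw [if_neg hi, mul_zero]

theorem dpart_eq_zero_of_ne {n : ℕ} {f : (Fin n → Q) → (Fin n → Q) → A}
    (hf : IsDiag f) (i : Fin (n + 1)) {x y : Fin (n + 1) → Q} (hxy : ∃ j, x j ≠ y j) :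
    dpart op i f x y = 0 := by
  by_cases hoff : ∃ k, x (i.succAbove k) ≠ y (i.succAbove k)
  · obtain ⟨k, hk⟩ := hoff
    exact dpart_eq_zero_of_ne_succAbove hinj hf i hk
  push Not at hoff
  have hoff' : ∀ j, j ≠ i → x j = y j := fun j hj => by
    obtain ⟨k, rfl⟩ := Fin.exists_succAbove_eq hj
    exact hoff k
  have hi : x i ≠ y i := by
    obtain ⟨j, hj⟩ := hxy
    obtain rfl | hji := eq_or_ne j i
    · exact hj
    · exact absurd (hoff' j hji) hj
  have hchain := opChain_ne_of_ne_of_eq_above hinj hi fun j hj => hoff' j hj.ne'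
  unfold dpart
  rw [if_neg hchain, if_neg hi, mul_zero, mul_zero, sub_zero]

end RightInjective

theorem isDiag_dYB_of_forall_isDiag_dpart {op : Q → Q → Q} {n : ℕ}
    {f : (Fin n → Q) → (Fin n → Q) → A}
    (hpart : ∀ i : Fin (n + 1), IsDiag (dpart op i f)) : IsDiag (dYB op f) :=
  fun x y hxy => Finset.sum_eq_zero fun i _ => by rw [hpart i x y hxy, mul_zero]

/-- Diagonal cochains form a subcomplex: if `f` is diagonal then so is each `d_i^n f`,
hence so is `d^n f`. -/
theorem isDiag_d (op : Q → Q → Q) (h : IsRack op) {n : ℕ}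
    (f : (Fin n → Q) → (Fin n → Q) → A) (hf : IsDiag f) :
    (∀ i : Fin (n + 1), IsDiag (dpart op i f)) ∧ IsDiag (dYB op f) := by
  have hpart : ∀ i : Fin (n + 1), IsDiag (dpart op i f) := fun i _ _ =>
    dpart_eq_zero_of_ne (fun c => (h.1 c).injective) hf i
  exact ⟨hpart, isDiag_dYB_of_forall_isDiag_dpart hpart⟩

end
end

section
/- Let Q be a rack. The quasi-diagonal cochains (those f : Q^n × Q^n → m with f[(x_1,...,x_n),(y_1,...,y_n)] = 0 whenever x_i ≢ y_i for some i, where ≡ is behavioural equivalence) form a subcomplex of the Yang-Baxter cochain complex. -/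
open scoped Classical

variable {Q : Type*}

noncomputable section
variable {A : Type*} [CommRing A]

/-- A matrix is quasi-diagonal if its entries vanish whenever `x i ≢ y i` for some `i`
(with `≡` behavioural equivalence). -/
def IsQDiag (op : Q → Q → Q) {n : ℕ} (f : (Fin n → Q) → (Fin n → Q) → A) : Prop :=
  ∀ x y : Fin n → Q, (∃ i, ¬ behEq op (x i) (y i)) → f x y = 0

/-!
In a rack, `u ∗ c ≡ v ∗ c` forces `u ≡ v`: right translation by `c` is injective and
`(a ∗ u) ∗ c = (a ∗ c) ∗ (u ∗ c)`. So an inequivalent pair `x_j ≢ y_j` survives any right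
action. If it sits at a position `j ≠ i` it survives into both faces of `d_i`, which then vanish
by quasi-diagonality of `f`; otherwise `j = i` is the only such position, so `x_i ≠ y_i` kills
the second term and `x_i^{x_{i+1}⋯x_n} ≢ y_i^{y_{i+1}⋯y_n}` kills the first.
-/

namespace IsRack

variable {op : Q → Q → Q}

theorem behEq_of_behEq_op (h : IsRack op) {u v c : Q}
    (huv : behEq op (op u c) (op v c)) : behEq op u v := by
  intro a
  apply (h.1 c).1
  change op (op a u) c = op (op a v) c
  rw [h.2 a u c, h.2 a v c]
  exact huv (op a c)

theorem not_behEq_foldl {ι : Type*} (h : IsRack op) {x y : ι → Q} (l : List ι)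
    (hl : ∀ j ∈ l, behEq op (x j) (y j)) {u v : Q} (huv : ¬ behEq op u v) :
    ¬ behEq op (l.foldl (fun a j => op a (x j)) u) (l.foldl (fun a j => op a (y j)) v) := by
  induction l generalizing u v with
  | nil => exact huv
  | cons j t ih =>
    rw [List.foldl_cons, List.foldl_cons, ← hl j List.mem_cons_self v]
    exact ih (fun k hk => hl k (List.mem_cons_of_mem _ hk))
      fun hc => huv (h.behEq_of_behEq_op hc)

theorem not_behEq_opChain (h : IsRack op) {n : ℕ} {x y : Fin (n + 1) → Q} {i : Fin (n + 1)}
    (hi : ¬ behEq op (x i) (y i)) (hlt : ∀ j, i < j → behEq op (x j) (y j)) :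
    ¬ behEq op (opChain op x i) (opChain op y i) :=
  h.not_behEq_foldl _ (fun j hj => hlt j (by simpa using (List.mem_filter.mp hj).2)) hi

end IsRack

theorem ne_of_not_behEq {op : Q → Q → Q} {u v : Q} (h : ¬ behEq op u v) : u ≠ v := by
  rintro rfl
  exact h fun _ => rfl

namespace IsQDiag

variable {op : Q → Q → Q} {n : ℕ}
  {f : (Fin n → Q) → (Fin n → Q) → A}

theorem dpart (hf : IsQDiag op f) (h : IsRack op) (i : Fin (n + 1)) :
    IsQDiag op (dpart op i f) := by
  rintro x y ⟨j, hj⟩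
  unfold _root_.dpart
  by_cases hface : ∃ k, ¬ behEq op (x (i.succAbove k)) (y (i.succAbove k))
  · obtain ⟨k, hk⟩ := hface
    rw [hf _ _ ⟨k, hk⟩, zero_mul, zero_sub, neg_eq_zero]
    by_cases hxy : x i = y i
    · -- the `k`-th arguments of the shifted face differ by at most a common right factor `x i`
      refine mul_eq_zero_of_left (hf _ _ ⟨k, ?_⟩) _
      split_ifs
      · rw [← hxy]
        exact fun hb => hk (h.behEq_of_behEq_op hb)
      · exact hk
    · rw [if_neg hxy, mul_zero]
  · push Not at hface
    obtain rfl : j = i := by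
      by_contra hne
      obtain ⟨k, rfl⟩ := Fin.exists_succAbove_eq hne
      exact hj (hface k)
    have hchain := ne_of_not_behEq <| h.not_behEq_opChain hj fun m hm => by
      obtain ⟨k, rfl⟩ := Fin.exists_succAbove_eq hm.ne'
      exact hface k
    rw [if_neg hchain, if_neg (ne_of_not_behEq hj), mul_zero, mul_zero, sub_zero]

theorem dYB (hf : IsQDiag op f) (h : IsRack op) : IsQDiag op (dYB op f) := fun x y hxy =>
  Finset.sum_eq_zero fun i _ => by rw [hf.dpart h i x y hxy, mul_zero]

end IsQDiag

/-- Quasi-diagonal cochains form a subcomplex of the Yang-Baxter cochain complex. -/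
theorem isQDiag_d (op : Q → Q → Q) (h : IsRack op) {n : ℕ}
    (f : (Fin n → Q) → (Fin n → Q) → A) (hf : IsQDiag op f) :
    (∀ i : Fin (n + 1), IsQDiag op (dpart op i f)) ∧ IsQDiag op (dYB op f) :=
  ⟨hf.dpart h, hf.dYB h⟩

end
end
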